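/- arXiv:1704.00468 — 4 statements merged into one kernel-verified Lean document; each statement's English description precedes it below -/
import Mathlib

section
/- Let X be the block diagonal matrix with diagonal blocks A and B (and zero off-diagonal blocks), where A and B each have at least k columns. Then X ∈ RIP(k, δ) if and only if both A ∈ RIP(k, δ) and B ∈ RIP(k, δ). -/
/-- `X ∈ RIP(k, δ)`: `(1-δ)‖u‖² ≤ ‖Xu‖² ≤ (1+δ)‖u‖²` for all `k`-sparse `u`. -/
def RIP {m p : Type*} [Fintype m] [Fintype p] (X : Matrix m p ℝ) (k : ℕ) (δ : ℝ) : Prop :=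
  ∀ u : p → ℝ, (Function.support u).ncard ≤ k →
    (1 - δ) * (∑ j, u j ^ 2) ≤ ∑ i, (X.mulVec u i) ^ 2 ∧
      ∑ i, (X.mulVec u i) ^ 2 ≤ (1 + δ) * (∑ j, u j ^ 2)

/-!
A vector on the columns of `[[A, 0], [0, B]]` is a pair `(u, v)`; its image is `(A u, B v)`,
its squared norm is `‖u‖² + ‖v‖²`, its squared image norm is `‖A u‖² + ‖B v‖²`, and its support
size is `|supp u| + |supp v|`. Testing `X` on `(u, 0)` and `(0, v)` gives the RIP of `A` and `B`;
conversely, the two RIP inequalities for the halves of a `k`-sparse vector add up.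
-/

open Function Matrix

section SumElim

variable {α β M : Type*}

theorem Function.support_sumElim [Zero M] (u : α → M) (v : β → M) :
    support (Sum.elim u v) = Sum.inl '' support u ∪ Sum.inr '' support v := by
  ext (x | x) <;> simp

theorem Function.ncard_support_sumElim [Finite α] [Finite β] [Zero M] (u : α → M) (v : β → M) :
    (support (Sum.elim u v)).ncard = (support u).ncard + (support v).ncard := by
  rw [support_sumElim, Set.ncard_union_eq
    (Set.isCompl_range_inl_range_inr.disjoint.mono (Set.image_subset_range _ _)
      (Set.image_subset_range _ _)),
    Set.ncard_image_of_injective _ Sum.inl_injective,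
    Set.ncard_image_of_injective _ Sum.inr_injective]

theorem Fintype.sum_sq_sumElim [Fintype α] [Fintype β] (u : α → ℝ) (v : β → ℝ) :
    ∑ j, Sum.elim u v j ^ 2 = ∑ j, u j ^ 2 + ∑ j, v j ^ 2 :=
  Fintype.sum_sum_type _

end SumElim

section BlockDiagonal

variable {mA mB pA pB : Type*} [Fintype mA] [Fintype mB] [Fintype pA] [Fintype pB]
  {A : Matrix mA pA ℝ} {B : Matrix mB pB ℝ} {k : ℕ} {δ : ℝ}

theorem Matrix.sum_sq_fromBlocks_mulVec_sumElim (A : Matrix mA pA ℝ) (B : Matrix mB pB ℝ)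
    (u : pA → ℝ) (v : pB → ℝ) :
    ∑ i, (fromBlocks A 0 0 B *ᵥ Sum.elim u v) i ^ 2 =
      ∑ i, (A *ᵥ u) i ^ 2 + ∑ i, (B *ᵥ v) i ^ 2 := by
  simp [fromBlocks_mulVec, Fintype.sum_sum_type]

theorem RIP.of_fromBlocks_left (h : RIP (fromBlocks A 0 0 B) k δ) : RIP A k δ := by
  intro u hu
  have hsparse : (support (Sum.elim u (0 : pB → ℝ))).ncard ≤ k := by
    simpa [ncard_support_sumElim] using hu
  have hblock := h _ hsparse
  rw [sum_sq_fromBlocks_mulVec_sumElim, Fintype.sum_sq_sumElim] at hblock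
  simpa using hblock

theorem RIP.of_fromBlocks_right (h : RIP (fromBlocks A 0 0 B) k δ) : RIP B k δ := by
  intro v hv
  have hsparse : (support (Sum.elim (0 : pA → ℝ) v)).ncard ≤ k := by
    simpa [ncard_support_sumElim] using hv
  have hblock := h _ hsparse
  rw [sum_sq_fromBlocks_mulVec_sumElim, Fintype.sum_sq_sumElim] at hblock
  simpa using hblock

theorem RIP.fromBlocks (hA : RIP A k δ) (hB : RIP B k δ) : RIP (fromBlocks A 0 0 B) k δ := by
  intro w hw
  obtain ⟨u, v, rfl⟩ : ∃ u v, w = Sum.elim u v := ⟨_, _, (Sum.elim_comp_inl_inr w).symm⟩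
  rw [ncard_support_sumElim] at hw
  obtain ⟨hAlow, hAup⟩ := hA u (by omega)
  obtain ⟨hBlow, hBup⟩ := hB v (by omega)
  rw [sum_sq_fromBlocks_mulVec_sumElim, Fintype.sum_sq_sumElim]
  constructor <;> linarith

end BlockDiagonal

theorem stmt_2_general {mA mB pA pB : ℕ} (A : Matrix (Fin mA) (Fin pA) ℝ)
    (B : Matrix (Fin mB) (Fin pB) ℝ) (k : ℕ) (δ : ℝ) :
    RIP (Matrix.fromBlocks A 0 0 B) k δ ↔ RIP A k δ ∧ RIP B k δ :=
  ⟨fun h ↦ ⟨h.of_fromBlocks_left, h.of_fromBlocks_right⟩, fun ⟨hA, hB⟩ ↦ hA.fromBlocks hB⟩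

/-- The block diagonal matrix `[[A,0],[0,B]]`, where `A` and `B` each have at least `k`
columns, is in `RIP(k, δ)` iff both `A ∈ RIP(k, δ)` and `B ∈ RIP(k, δ)`. -/
theorem stmt_2 {mA mB pA pB : ℕ} (A : Matrix (Fin mA) (Fin pA) ℝ)
    (B : Matrix (Fin mB) (Fin pB) ℝ) (k : ℕ) (δ : ℝ) (hA : k ≤ pA) (hB : k ≤ pB) :
    RIP (Matrix.fromBlocks A 0 0 B) k δ ↔ RIP A k δ ∧ RIP B k δ :=
  stmt_2_general A B k δ
end

section
/- Let X satisfy ‖Xu‖² ≤ (1+δ)‖u‖² for all u, and let X' = μX for a scalar 0 < μ ≤ 1. Fix δ' ∈ (δ, 1), λ₂ > 1 with λ₂δ < 1, and suppose μ² ∈ [(1-δ')/(1-δ), (1-δ')/(1-λ₂δ)). Then: (a) if X ∈ RIP(k, δ) then X' ∈ RIP(k, δ'); and (b) if X ∉ RIP(k', λ₂δ), then X' ∉ RIP(k', λ₂'δ') where λ₂' = (1 - μ²(1 - λ₂δ))/δ' > 1. -/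
section Rescaling

variable {m p : Type*} [Fintype m] [Fintype p] {X : Matrix m p ℝ} {k : ℕ} {δ δ' μ : ℝ}

lemma sum_sq_smul_mulVec (X : Matrix m p ℝ) (μ : ℝ) (u : p → ℝ) :
    ∑ i, ((μ • X).mulVec u i) ^ 2 = μ ^ 2 * ∑ i, (X.mulVec u i) ^ 2 := by
  simp only [Matrix.smul_mulVec, Pi.smul_apply, smul_eq_mul, mul_pow, Finset.mul_sum]

lemma RIP.smul_of_le (hX : RIP X k δ) (hlo : 1 - δ' ≤ μ ^ 2 * (1 - δ))
    (hhi : μ ^ 2 * (1 + δ) ≤ 1 + δ') : RIP (μ • X) k δ' := by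
  intro u hu
  obtain ⟨hl, hr⟩ := hX u hu
  have hS : 0 ≤ ∑ j, u j ^ 2 := by positivity
  rw [sum_sq_smul_mulVec]
  constructor
  · calc (1 - δ') * ∑ j, u j ^ 2 ≤ μ ^ 2 * ((1 - δ) * ∑ j, u j ^ 2) := by
          rw [← mul_assoc]; gcongr
      _ ≤ μ ^ 2 * ∑ i, (X.mulVec u i) ^ 2 := by gcongr
  · calc μ ^ 2 * ∑ i, (X.mulVec u i) ^ 2 ≤ μ ^ 2 * ((1 + δ) * ∑ j, u j ^ 2) := by gcongr
      _ ≤ (1 + δ') * ∑ j, u j ^ 2 := by rw [← mul_assoc]; gcongr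

lemma exists_sum_sq_mulVec_lt_of_not_RIP (hX : ¬ RIP X k δ)
    (hub : ∀ u : p → ℝ, (Function.support u).ncard ≤ k →
      ∑ i, (X.mulVec u i) ^ 2 ≤ (1 + δ) * ∑ j, u j ^ 2) :
    ∃ u : p → ℝ, (Function.support u).ncard ≤ k ∧
      ∑ i, (X.mulVec u i) ^ 2 < (1 - δ) * ∑ j, u j ^ 2 := by
  by_contra! h
  exact hX fun u hu => ⟨h u hu, hub u hu⟩

lemma not_RIP_smul (hX : ¬ RIP X k δ) (hμ : μ ≠ 0)
    (hub : ∀ u : p → ℝ, (Function.support u).ncard ≤ k →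
      ∑ i, (X.mulVec u i) ^ 2 ≤ (1 + δ) * ∑ j, u j ^ 2) :
    ¬ RIP (μ • X) k (1 - μ ^ 2 * (1 - δ)) := by
  intro hμX
  obtain ⟨u, hu, hlt⟩ := exists_sum_sq_mulVec_lt_of_not_RIP hX hub
  have hle := (hμX u hu).1
  rw [sum_sq_smul_mulVec, sub_sub_cancel, mul_assoc] at hle
  exact hlt.not_ge (le_of_mul_le_mul_left hle (by positivity))

end Rescaling

/-- Rescaling: if `‖Xu‖² ≤ (1+δ)‖u‖²` for all `u` and `X' = μX` with
`μ² ∈ [(1-δ')/(1-δ), (1-δ')/(1-λ₂δ))`, then (a) `X ∈ RIP(k, δ)` implies `X' ∈ RIP(k, δ')`,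
and (b) `X ∉ RIP(k', λ₂δ)` implies `X' ∉ RIP(k', λ₂'δ')` where
`λ₂' = (1 - μ²(1 - λ₂δ))/δ' > 1`. -/
theorem stmt_7 {n p : ℕ} (X : Matrix (Fin n) (Fin p) ℝ) (k k' : ℕ) (δ δ' μ lam₂ : ℝ)
    (hδ : 0 < δ) (hδ' : δ < δ' ∧ δ' < 1) (hlam₂ : 1 < lam₂) (hlamδ : lam₂ * δ < 1)
    (hμ0 : 0 < μ) (hμ1 : μ ≤ 1)
    (hμlo : (1 - δ') / (1 - δ) ≤ μ ^ 2) (hμhi : μ ^ 2 < (1 - δ') / (1 - lam₂ * δ))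
    (hub : ∀ u : Fin p → ℝ, ∑ i, (X.mulVec u i) ^ 2 ≤ (1 + δ) * ∑ j, u j ^ 2) :
    (RIP X k δ → RIP (μ • X) k δ') ∧
      (1 : ℝ) < (1 - μ ^ 2 * (1 - lam₂ * δ)) / δ' ∧
      (¬ RIP X k' (lam₂ * δ) →
        ¬ RIP (μ • X) k' (((1 - μ ^ 2 * (1 - lam₂ * δ)) / δ') * δ')) := by
  obtain ⟨hδδ', hδ'1⟩ := hδ'
  have hδ'0 : 0 < δ' := hδ.trans hδδ'
  have hlo : 1 - δ' ≤ μ ^ 2 * (1 - δ) := (div_le_iff₀ (by linarith)).1 hμlo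
  have hhi : μ ^ 2 * (1 - lam₂ * δ) < 1 - δ' := (lt_div_iff₀ (by linarith)).1 hμhi
  have hμsq : μ ^ 2 ≤ 1 := pow_le_one₀ hμ0.le hμ1
  have hδlam : δ ≤ lam₂ * δ := le_mul_of_one_le_left hδ.le hlam₂.le
  refine ⟨fun hX => hX.smul_of_le hlo (by nlinarith), (lt_div_iff₀ hδ'0).2 (by linarith),
    fun hX => ?_⟩
  rw [div_mul_cancel₀ _ hδ'0.ne']
  exact not_RIP_smul hX hμ0.ne' fun u _ => (hub u).trans (by gcongr)
end

section
/- Let w ∈ R^{3n} with ‖w‖² = 2n, write w = (w⁺; w⁻; v) with w⁺, w⁻, v ∈ R^n, and suppose ‖X̃w‖² ≤ 2n where X̃ is the matrix of equation (7). Then with v̄ = (1/n)Σᵢ vᵢ: (i) Σᵢ(vᵢ - v̄)² < 2ξ²n, (ii) Σᵢ(wᵢ⁺ + wᵢ⁻ - v̄)² < 8ξ²n, and (iii) if moreover ‖X̃w‖² ≤ (1+ε²)n, then v̄² > 1 - 3ε². -/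
/-!
The rows of `X̃` give
`‖X̃w‖² ≥ ‖w⁺‖² + ‖w⁻‖² + ξ⁻²(‖v - v̄𝟙‖² + ‖w⁺ + w⁻ - v‖²)`.
Since `‖w⁺‖² + ‖w⁻‖² + ‖v‖² = 2n`, the bound `‖X̃w‖² ≤ 2n` leaves
`‖v - v̄𝟙‖² + ‖w⁺ + w⁻ - v‖² ≤ ξ²‖v‖² ≤ 2ξ²n`. This is (i), strictly because equality would force
`w⁺ = w⁻ = 0` and `v = w⁺ + w⁻`, i.e. `w = 0`; with `(a + b)² ≤ 2a² + 2b²` it also gives (ii).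
For (iii), `‖v - v̄𝟙‖² = ‖v‖² - n v̄²` and `ξ ≤ 1` turn `‖X̃w‖² ≤ (1 + ε²)n` into `v̄² ≥ 1 - ε²`.
-/

/-- The matrix `X̃` of equation (7), with blocks
`[I,0,0; 0,I,0; 0,0,ξ⁻¹P; ξ⁻¹I,ξ⁻¹I,-ξ⁻¹I; εΦ,0,-εI']`, where `P = I - (1/n)𝟙𝟙ᵀ` and
`I'` is the `n×n` identity truncated to `m` rows. Rows are indexed by
`Fin n ⊕ Fin n ⊕ Fin n ⊕ Fin n ⊕ Fin m` and columns by `Fin n ⊕ Fin n ⊕ Fin n`. -/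
noncomputable def Xt (n m : ℕ) (Φ : Matrix (Fin m) (Fin n) ℝ) (ε ξ : ℝ) :
    Matrix (Fin n ⊕ Fin n ⊕ Fin n ⊕ Fin n ⊕ Fin m) (Fin n ⊕ Fin n ⊕ Fin n) ℝ :=
  Matrix.of fun i j =>
    match i, j with
    | .inl i, .inl j => if i = j then 1 else 0
    | .inl _, _ => 0
    | .inr (.inl i), .inr (.inl j) => if i = j then 1 else 0
    | .inr (.inl _), _ => 0
    | .inr (.inr (.inl i)), .inr (.inr j) => ξ⁻¹ * ((if i = j then 1 else 0) - 1 / n)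
    | .inr (.inr (.inl _)), _ => 0
    | .inr (.inr (.inr (.inl i))), .inl j => ξ⁻¹ * (if i = j then 1 else 0)
    | .inr (.inr (.inr (.inl i))), .inr (.inl j) => ξ⁻¹ * (if i = j then 1 else 0)
    | .inr (.inr (.inr (.inl i))), .inr (.inr j) => -(ξ⁻¹) * (if i = j then 1 else 0)
    | .inr (.inr (.inr (.inr i))), .inl j => ε * Φ i j
    | .inr (.inr (.inr (.inr _))), .inr (.inl _) => 0
    | .inr (.inr (.inr (.inr i))), .inr (.inr j) =>
        -ε * (if (i : ℕ) = (j : ℕ) then 1 else 0)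

open Finset Matrix

theorem Finset.sum_sq_add_le {ι : Type*} (s : Finset ι) (f g : ι → ℝ) :
    ∑ i ∈ s, (f i + g i) ^ 2 ≤ 2 * ∑ i ∈ s, f i ^ 2 + 2 * ∑ i ∈ s, g i ^ 2 := by
  rw [mul_sum, mul_sum, ← sum_add_distrib]
  gcongr with i
  linarith [add_sq_le (a := f i) (b := g i)]

theorem Finset.sum_sq_sub_mean {ι : Type*} (s : Finset ι) (f : ι → ℝ) :
    ∑ i ∈ s, (f i - (1 / #s) * ∑ j ∈ s, f j) ^ 2 =
      ∑ i ∈ s, f i ^ 2 - #s * ((1 / #s) * ∑ j ∈ s, f j) ^ 2 := by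
  rcases s.eq_empty_or_nonempty with rfl | hs
  · simp
  have hcard : (#s : ℝ) ≠ 0 := by exact_mod_cast hs.card_pos.ne'
  simp only [sub_sq, sum_add_distrib, sum_sub_distrib, ← sum_mul, ← mul_sum, sum_const,
    nsmul_eq_mul]
  field_simp
  ring

theorem Finset.sum_sq_le_of_add_sub {ι : Type*} (s : Finset ι) (a b v : ι → ℝ) :
    ∑ i ∈ s, v i ^ 2 ≤
      4 * ∑ i ∈ s, a i ^ 2 + 4 * ∑ i ∈ s, b i ^ 2 + 2 * ∑ i ∈ s, (a i + b i - v i) ^ 2 := by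
  have hab := sum_sq_add_le s a b
  calc ∑ i ∈ s, v i ^ 2 = ∑ i ∈ s, ((a i + b i) + -(a i + b i - v i)) ^ 2 := by simp
    _ ≤ 2 * ∑ i ∈ s, (a i + b i) ^ 2 + 2 * ∑ i ∈ s, (-(a i + b i - v i)) ^ 2 :=
      sum_sq_add_le ..
    _ ≤ _ := by simp only [neg_sq]; linarith

section Xt

variable {n m : ℕ} (Φ : Matrix (Fin m) (Fin n) ℝ) (ε ξ : ℝ) (w : Fin n ⊕ Fin n ⊕ Fin n → ℝ)

theorem Xt_mulVec_inl (i : Fin n) : (Xt n m Φ ε ξ *ᵥ w) (.inl i) = w (.inl i) := by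
  simp [Xt, Matrix.mulVec, dotProduct, Fintype.sum_sum_type, ite_mul]

theorem Xt_mulVec_inr_inl (i : Fin n) :
    (Xt n m Φ ε ξ *ᵥ w) (.inr (.inl i)) = w (.inr (.inl i)) := by
  simp [Xt, Matrix.mulVec, dotProduct, Fintype.sum_sum_type, ite_mul]

theorem Xt_mulVec_centering (i : Fin n) :
    (Xt n m Φ ε ξ *ᵥ w) (.inr (.inr (.inl i))) =
      ξ⁻¹ * (w (.inr (.inr i)) - (1 / n) * ∑ j, w (.inr (.inr j))) := by
  simp only [Xt, Matrix.mulVec, dotProduct, Matrix.of_apply, Fintype.sum_sum_type]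
  simp only [zero_mul, sum_const_zero, one_div, mul_sub, mul_ite, mul_one, mul_zero, sub_mul,
    ite_mul, sum_sub_distrib, sum_ite_eq, mem_univ, ↓reduceIte, zero_add, mul_sum, sub_right_inj]
  exact sum_congr rfl fun _ _ => by ring

theorem Xt_mulVec_consistency (i : Fin n) :
    (Xt n m Φ ε ξ *ᵥ w) (.inr (.inr (.inr (.inl i)))) =
      ξ⁻¹ * (w (.inl i) + w (.inr (.inl i)) - w (.inr (.inr i))) := by
  simp [Xt, Matrix.mulVec, dotProduct, Fintype.sum_sum_type, ite_mul]
  ring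

theorem sum_sq_le_sum_sq_Xt_mulVec :
    ∑ i, w (.inl i) ^ 2 + ∑ i, w (.inr (.inl i)) ^ 2 +
        ξ⁻¹ ^ 2 * (∑ i, (w (.inr (.inr i)) - (1 / n) * ∑ j, w (.inr (.inr j))) ^ 2 +
          ∑ i, (w (.inl i) + w (.inr (.inl i)) - w (.inr (.inr i))) ^ 2) ≤
      ∑ i, (Xt n m Φ ε ξ *ᵥ w) i ^ 2 := by
  simp only [Fintype.sum_sum_type, Xt_mulVec_inl, Xt_mulVec_inr_inl, Xt_mulVec_centering,
    Xt_mulVec_consistency, mul_pow, ← mul_sum, mul_add]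
  have : 0 ≤ ∑ i : Fin m, (Xt n m Φ ε ξ *ᵥ w) (.inr (.inr (.inr (.inr i)))) ^ 2 :=
    sum_nonneg fun _ _ => sq_nonneg _
  linarith

end Xt

section BlockBounds

variable {n : ℕ} {ξ : ℝ} {a b v : Fin n → ℝ}

theorem sum_sq_sub_mean_add_le (hξ : 0 < ξ) {N : ℝ}
    (hw : ∑ i, a i ^ 2 + ∑ i, b i ^ 2 + ∑ i, v i ^ 2 = N)
    (hX : ∑ i, a i ^ 2 + ∑ i, b i ^ 2 + ξ⁻¹ ^ 2 * (∑ i, (v i - (1 / n) * ∑ j, v j) ^ 2 +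
      ∑ i, (a i + b i - v i) ^ 2) ≤ N) :
    ∑ i, (v i - (1 / n) * ∑ j, v j) ^ 2 + ∑ i, (a i + b i - v i) ^ 2 ≤ ξ ^ 2 * ∑ i, v i ^ 2 := by
  have hX' : ξ⁻¹ ^ 2 * (∑ i, (v i - (1 / n) * ∑ j, v j) ^ 2 + ∑ i, (a i + b i - v i) ^ 2) ≤
      ∑ i, v i ^ 2 := by linarith
  rwa [inv_pow, inv_mul_le_iff₀ (by positivity)] at hX'

theorem sum_sq_sub_mean_lt (hn : 0 < n) (hξ : 0 < ξ)
    (hw : ∑ i, a i ^ 2 + ∑ i, b i ^ 2 + ∑ i, v i ^ 2 = 2 * n)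
    (hX : ∑ i, a i ^ 2 + ∑ i, b i ^ 2 + ξ⁻¹ ^ 2 * (∑ i, (v i - (1 / n) * ∑ j, v j) ^ 2 +
      ∑ i, (a i + b i - v i) ^ 2) ≤ 2 * n) :
    ∑ i, (v i - (1 / n) * ∑ j, v j) ^ 2 < 2 * ξ ^ 2 * n := by
  have hCD := sum_sq_sub_mean_add_le hξ hw hX
  have hV := sum_sq_le_of_add_sub univ a b v
  have hA : 0 ≤ ∑ i, a i ^ 2 := by positivity
  have hB : 0 ≤ ∑ i, b i ^ 2 := by positivity
  have hD : 0 ≤ ∑ i, (a i + b i - v i) ^ 2 := by positivity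
  have hn' : (0 : ℝ) < n := by exact_mod_cast hn
  by_contra! hC
  have hABD : ξ ^ 2 * (∑ i, a i ^ 2 + ∑ i, b i ^ 2) + ∑ i, (a i + b i - v i) ^ 2 ≤ 0 := by
    nlinarith
  have hAB : ∑ i, a i ^ 2 + ∑ i, b i ^ 2 ≤ 0 := by nlinarith [pow_pos hξ 2]
  linarith [mul_nonneg (sq_nonneg ξ) (add_nonneg hA hB)]

theorem sum_sq_add_sub_mean_lt (hn : 0 < n) (hξ : 0 < ξ)
    (hw : ∑ i, a i ^ 2 + ∑ i, b i ^ 2 + ∑ i, v i ^ 2 = 2 * n)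
    (hX : ∑ i, a i ^ 2 + ∑ i, b i ^ 2 + ξ⁻¹ ^ 2 * (∑ i, (v i - (1 / n) * ∑ j, v j) ^ 2 +
      ∑ i, (a i + b i - v i) ^ 2) ≤ 2 * n) :
    ∑ i, (a i + b i - (1 / n) * ∑ j, v j) ^ 2 < 8 * ξ ^ 2 * n := by
  have hV : ∑ i, v i ^ 2 ≤ 2 * n := by
    have : 0 ≤ ∑ i, a i ^ 2 + ∑ i, b i ^ 2 := by positivity
    linarith
  have hn' : (0 : ℝ) < n := by exact_mod_cast hn
  calc ∑ i, (a i + b i - (1 / n) * ∑ j, v j) ^ 2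
      = ∑ i, ((a i + b i - v i) + (v i - (1 / n) * ∑ j, v j)) ^ 2 := by simp
    _ ≤ 2 * ∑ i, (a i + b i - v i) ^ 2 + 2 * ∑ i, (v i - (1 / n) * ∑ j, v j) ^ 2 :=
      sum_sq_add_le ..
    _ ≤ 2 * (ξ ^ 2 * (2 * n)) := by
      nlinarith [sum_sq_sub_mean_add_le hξ hw hX, mul_le_mul_of_nonneg_left hV (sq_nonneg ξ)]
    _ < 8 * ξ ^ 2 * n := by nlinarith [pow_pos hξ 2]

theorem sq_mean_gt (hn : 0 < n) (hξ : 0 < ξ) {ε : ℝ} (hξε : ξ ≤ ε) (hε : ε < 1)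
    (hw : ∑ i, a i ^ 2 + ∑ i, b i ^ 2 + ∑ i, v i ^ 2 = 2 * n)
    (hX : ∑ i, a i ^ 2 + ∑ i, b i ^ 2 + ξ⁻¹ ^ 2 * (∑ i, (v i - (1 / n) * ∑ j, v j) ^ 2 +
      ∑ i, (a i + b i - v i) ^ 2) ≤ (1 + ε ^ 2) * n) :
    1 - 3 * ε ^ 2 < ((1 / n) * ∑ j, v j) ^ 2 := by
  have hn' : (0 : ℝ) < n := by exact_mod_cast hn
  have hvar := sum_sq_sub_mean univ v
  simp only [card_univ, Fintype.card_fin] at hvar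
  have hD : 0 ≤ ∑ i, (a i + b i - v i) ^ 2 := by positivity
  have hξ1 : 1 ≤ ξ⁻¹ ^ 2 := one_le_pow₀ ((one_le_inv₀ hξ).2 (by linarith))
  have hC' : ∑ i, (v i - (1 / n) * ∑ j, v j) ^ 2 ≤
      ξ⁻¹ ^ 2 * (∑ i, (v i - (1 / n) * ∑ j, v j) ^ 2 + ∑ i, (a i + b i - v i) ^ 2) :=
    (le_add_of_nonneg_right hD).trans (le_mul_of_one_le_left (by positivity) hξ1)
  have hmean : 1 - ε ^ 2 ≤ ((1 / n) * ∑ j, v j) ^ 2 := by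
    rw [← mul_le_mul_iff_of_pos_left hn']
    linarith
  linarith [pow_pos (hξ.trans_le hξε) 2]

end BlockBounds

theorem stmt_13_general {n m : ℕ} (hn : 0 < n)
    (Φ : Matrix (Fin m) (Fin n) ℝ)
    (ε ξ : ℝ) (hξ : 0 < ξ) (hξε : ξ ≤ ε) (hε : ε < 1)
    (w : (Fin n ⊕ Fin n ⊕ Fin n) → ℝ)
    (hw : ∑ j, w j ^ 2 = 2 * n)
    (hXw : ∑ i, ((Xt n m Φ ε ξ).mulVec w i) ^ 2 ≤ 2 * n) :
    (∑ i, (w (Sum.inr (Sum.inr i)) -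
        (1 / n) * ∑ i', w (Sum.inr (Sum.inr i'))) ^ 2 < 2 * ξ ^ 2 * n) ∧
    (∑ i, (w (Sum.inl i) + w (Sum.inr (Sum.inl i)) -
        (1 / n) * ∑ i', w (Sum.inr (Sum.inr i'))) ^ 2 < 8 * ξ ^ 2 * n) ∧
    (∑ i, ((Xt n m Φ ε ξ).mulVec w i) ^ 2 ≤ (1 + ε ^ 2) * n →
      ((1 / n) * ∑ i', w (Sum.inr (Sum.inr i'))) ^ 2 > 1 - 3 * ε ^ 2) := by
  have hw' : ∑ i, w (.inl i) ^ 2 + ∑ i, w (.inr (.inl i)) ^ 2 + ∑ i, w (.inr (.inr i)) ^ 2 =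
      2 * n := by
    rw [← hw, Fintype.sum_sum_type, Fintype.sum_sum_type, add_assoc]
  have hX := sum_sq_le_sum_sq_Xt_mulVec Φ ε ξ w
  exact ⟨sum_sq_sub_mean_lt hn hξ hw' (hX.trans hXw),
    sum_sq_add_sub_mean_lt hn hξ hw' (hX.trans hXw),
    fun h => sq_mean_gt hn hξ hξε hε hw' (hX.trans h)⟩

/-- Lemma 1 of the paper: if `‖w‖² = 2n` and `‖X̃w‖² ≤ 2n`, then writing
`w = (w⁺; w⁻; v)` and `v̄ = (1/n)Σᵢ vᵢ`: (i) `Σᵢ(vᵢ - v̄)² < 2ξ²n`,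
(ii) `Σᵢ(wᵢ⁺ + wᵢ⁻ - v̄)² < 8ξ²n`, and (iii) if moreover `‖X̃w‖² ≤ (1+ε²)n`,
then `v̄² > 1 - 3ε²`. -/
theorem stmt_13 {n m : ℕ} (hn : 0 < n)
    (Φ : Matrix (Fin m) (Fin n) ℝ) (hΦ : ∀ i j, Φ i j = 0 ∨ Φ i j = 1)
    (ε ξ : ℝ) (hξ : 0 < ξ) (hξε : ξ ≤ ε) (hε : ε < 1)
    (w : (Fin n ⊕ Fin n ⊕ Fin n) → ℝ)
    (hw : ∑ j, w j ^ 2 = 2 * n)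
    (hXw : ∑ i, ((Xt n m Φ ε ξ).mulVec w i) ^ 2 ≤ 2 * n) :
    (∑ i, (w (Sum.inr (Sum.inr i)) -
        (1 / n) * ∑ i', w (Sum.inr (Sum.inr i'))) ^ 2 < 2 * ξ ^ 2 * n) ∧
    (∑ i, (w (Sum.inl i) + w (Sum.inr (Sum.inl i)) -
        (1 / n) * ∑ i', w (Sum.inr (Sum.inr i'))) ^ 2 < 8 * ξ ^ 2 * n) ∧
    (∑ i, ((Xt n m Φ ε ξ).mulVec w i) ^ 2 ≤ (1 + ε ^ 2) * n →
      ((1 / n) * ∑ i', w (Sum.inr (Sum.inr i'))) ^ 2 > 1 - 3 * ε ^ 2) :=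
  stmt_13_general hn Φ ε ξ hξ hξε hε w hw hXw
end

section
/- Given a 3SAT clause (a ∨ b ∨ c) on literals a, b, c and four fresh boolean variables z₁, z₂, z₃, z₄, consider the three exactly-one clauses E(a, z₁, z₂), E(¬b, z₁, z₃), E(¬c, z₂, z₄), where E(x, y, z) is true iff exactly one of its arguments is true. Then: (a) if an assignment satisfies (a ∨ b ∨ c), there is a setting of z₁,…,z₄ making all three exactly-one clauses true; and (b) if an assignment makes (a ∨ b ∨ c) false, then for every setting of z₁,…,z₄ at least one of the three exactly-one clauses is false. -/
/-!
If the clause is false, `E(¬b, z₁, z₃)` and `E(¬c, z₂, z₄)` have a true first argument and force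
`z₁ = z₂ = false`, which violates `E(false, z₁, z₂)`. If the clause holds, the auxiliary variables
can be read off from `a`, `b`, `c` explicitly.
-/

def exactlyOne (x y z : Bool) : Prop :=
  (x = true ∧ y = false ∧ z = false) ∨ (x = false ∧ y = true ∧ z = false) ∨
    (x = false ∧ y = false ∧ z = true)

theorem exactlyOne_true_left {y z : Bool} : exactlyOne true y z ↔ y = false ∧ z = false := by
  simp [exactlyOne]

theorem exactlyOne_false_left {y z : Bool} : exactlyOne false y z ↔ y ≠ z := by
  cases y <;> cases z <;> simp [exactlyOne]

/-- If `a` holds, `z₁ = z₂ = false` and `z₃`, `z₄` copy `b`, `c`; otherwise the true one of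
`z₁`, `z₂` is `z₁` when `b` holds and `z₂` (which needs `c`) when it does not. -/
theorem exactlyOne_gadget_of_or_eq_true {a b c : Bool} (h : (a || b || c) = true) :
    exactlyOne a (!a && b) (!a && !b) ∧ exactlyOne (!b) (!a && b) (a && b) ∧
      exactlyOne (!c) (!a && !b) (c && (a || b)) := by
  revert h
  cases a <;> cases b <;> cases c <;> simp [exactlyOne]

theorem not_exactlyOne_gadget_of_or_eq_false {a b c : Bool} (h : (a || b || c) = false)
    (z₁ z₂ z₃ z₄ : Bool) :
    ¬ (exactlyOne a z₁ z₂ ∧ exactlyOne (!b) z₁ z₃ ∧ exactlyOne (!c) z₂ z₄) := by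
  obtain ⟨⟨rfl, rfl⟩, rfl⟩ : (a = false ∧ b = false) ∧ c = false := by
    simpa only [Bool.or_eq_false_iff] using h
  rintro ⟨hz₁z₂, hz₁z₃, hz₂z₄⟩
  rw [exactlyOne_false_left] at hz₁z₂
  rw [Bool.not_false, exactlyOne_true_left] at hz₁z₃ hz₂z₄
  exact hz₁z₂ (hz₁z₃.1.trans hz₂z₄.1.symm)

/-- Gadget replacing a 3SAT clause `(a ∨ b ∨ c)` by the exactly-one clauses
`E(a,z₁,z₂)`, `E(¬b,z₁,z₃)`, `E(¬c,z₂,z₄)`: (a) if the clause is satisfied there is a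
setting of `z₁,…,z₄` satisfying all three; (b) if the clause is unsatisfied, every setting
of `z₁,…,z₄` falsifies at least one of them. -/
theorem stmt_17 (a b c : Bool) :
    ((a || b || c) = true →
      ∃ z₁ z₂ z₃ z₄ : Bool,
        exactlyOne a z₁ z₂ ∧ exactlyOne (!b) z₁ z₃ ∧ exactlyOne (!c) z₂ z₄) ∧
    ((a || b || c) = false →
      ∀ z₁ z₂ z₃ z₄ : Bool,
        ¬ (exactlyOne a z₁ z₂ ∧ exactlyOne (!b) z₁ z₃ ∧ exactlyOne (!c) z₂ z₄)) :=
  ⟨fun h => ⟨_, _, _, _, exactlyOne_gadget_of_or_eq_true h⟩,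
    not_exactlyOne_gadget_of_or_eq_false⟩
end
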